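/- arXiv:2602.03251 — 3 statements merged into one kernel-verified Lean document; each statement's English description precedes it below -/
import Mathlib

section
/- Let K be a field of characteristic 0 and let L be a quadratic extension of K generated by an element s with s ∉ K and r := s² ∈ K. If both s² − 2s + 4 and s² + 2s + 4 are squares in L, then r² + 4r + 16 is a square in K. -/
/-! Write a square root `u` of `s² - 2s + 4 = r - 2s + 4` in the `K`-basis `(1, s)` of `L` as
`u = a + bs`. Comparing coefficients in `u² = (a² + b²r) + 2ab·s` gives `a² + b²r = r + 4` and
`ab = -1`, so the norm `a² - b²r` of `u` satisfies
`(a² - b²r)² = (a² + b²r)² - r(2ab)² = (r + 4)² - 4r = r² + 4r + 16`. -/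

section

variable {K L : Type*} [Field K] [Ring L] [Nontrivial L] [Algebra K L] {s : L}

theorem linearIndependent_one_of_notMem_range (hs : s ∉ Set.range (algebraMap K L)) :
    LinearIndependent K ![1, s] :=
  (LinearIndependent.pair_iff' one_ne_zero).2 fun a ha =>
    hs ⟨a, by rw [Algebra.algebraMap_eq_smul_one, ha]⟩

theorem eq_of_algebraMap_add_algebraMap_mul_eq (hs : s ∉ Set.range (algebraMap K L))
    {a b a' b' : K}
    (h : algebraMap K L a + algebraMap K L b * s = algebraMap K L a' + algebraMap K L b' * s) :
    a = a' ∧ b = b' :=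
  (linearIndependent_one_of_notMem_range hs).eq_of_pair (by simpa [Algebra.smul_def] using h)

theorem exists_algebraMap_add_algebraMap_mul_eq (hL : Module.finrank K L = 2)
    (hs : s ∉ Set.range (algebraMap K L)) (u : L) :
    ∃ a b : K, algebraMap K L a + algebraMap K L b * s = u := by
  have hspan := (linearIndependent_one_of_notMem_range hs).span_eq_top_of_card_eq_finrank
    (by simp [hL])
  rw [Matrix.range_cons_cons_empty] at hspan
  obtain ⟨a, b, hab⟩ := Submodule.mem_span_pair.1 (hspan ▸ Submodule.mem_top (x := u))
  exact ⟨a, b, by simpa [Algebra.smul_def] using hab⟩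

end

theorem square_norm_condition_in_quadratic_ext_general
    (K L : Type*) [Field K] [Field L] [Algebra K L]
    (hquad : Module.finrank K L = 2)
    (s : L) (hs : s ∉ Set.range (algebraMap K L))
    (r : K) (hr : algebraMap K L r = s ^ 2)
    (h1 : ∃ u : L, u ^ 2 = s ^ 2 - 2 * s + 4) :
    ∃ c : K, c ^ 2 = r ^ 2 + 4 * r + 16 := by
  obtain ⟨u, hu⟩ := h1
  obtain ⟨a, b, rfl⟩ := exists_algebraMap_add_algebraMap_mul_eq hquad hs u
  have hcoeff : algebraMap K L (a ^ 2 + b ^ 2 * r) + algebraMap K L (2 * a * b) * s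
      = algebraMap K L (r + 4) + algebraMap K L (-2) * s := by
    simp only [map_add, map_mul, map_pow, map_neg, map_ofNat]
    linear_combination hu + (algebraMap K L b ^ 2 - 1) * hr
  obtain ⟨hnorm, hab⟩ := eq_of_algebraMap_add_algebraMap_mul_eq hs hcoeff
  exact ⟨a ^ 2 - b ^ 2 * r,
    by linear_combination (a ^ 2 + b ^ 2 * r + r + 4) * hnorm - r * (2 * a * b - 2) * hab⟩

theorem square_norm_condition_in_quadratic_ext
    (K L : Type*) [Field K] [CharZero K] [Field L] [Algebra K L]
    (hquad : Module.finrank K L = 2)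
    (s : L) (hs : s ∉ Set.range (algebraMap K L))
    (hgen : IntermediateField.adjoin K ({s} : Set L) = ⊤)
    (r : K) (hr : algebraMap K L r = s ^ 2)
    (h1 : ∃ u : L, u ^ 2 = s ^ 2 - 2 * s + 4)
    (h2 : ∃ v : L, v ^ 2 = s ^ 2 + 2 * s + 4) :
    ∃ c : K, c ^ 2 = r ^ 2 + 4 * r + 16 :=
  square_norm_condition_in_quadratic_ext_general K L hquad s hs r hr h1
end

section
/- Let P = (x₀, y₀) be an affine point of the elliptic curve E₁ : y² = x³ − x² + x with coordinates in an algebraic closure ℚ̄ of ℚ, and suppose that P has finite order equal to a power of 2 in the group E₁(ℚ̄). Then the degree [ℚ(x₀, y₀) : ℚ] is a power of 2. -/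
/-!
If `2P` is defined over a field `F` of 2-power degree over `ℚ`, then so is `P = (x, y)`.
When `y ≠ 0`, the `x`-coordinate `u` of `2P` satisfies `4y²u = (x² - 1)²`, and dividing by
`x²` shows that `s = x + 1/x` is a root of `X² - 4uX + 4u - 4`. Hence `s`, then `x` (a root of
`X² - sX + 1`), then `y` (a square root of `x³ - x² + x`) each lie in an extension of degree at
most 2 of the previous field. When `y = 0`, `x` is a root of `X(X² - X + 1)`. Halving `k` times,
starting from `2ᵏP = 0`, puts `x₀, y₀` in a field of 2-power degree, and subfields of such a
field have 2-power degree as well.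
-/

noncomputable section

/-- The elliptic curve `E₁ : y² = x³ - x² + x` over `ℚ`. -/
def E₁ : WeierstrassCurve ℚ := ⟨0, -1, 0, 1, 0⟩

open IntermediateField Module Polynomial

section TwoPowerDegree

variable {K L : Type*} [Field K] [Field L] [Algebra K L]

theorem IntermediateField.finrank_adjoin_simple_dvd_two {a : L} (c b : K)
    (h : a ^ 2 + algebraMap K L c * a + algebraMap K L b = 0) : finrank K K⟮a⟯ ∣ 2 := by
  have hp : (X ^ 2 + C c * X + C b).Monic := by monicity!
  have hp_deg : (X ^ 2 + C c * X + C b).natDegree = 2 := by compute_degree!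
  have hpa : aeval a (X ^ 2 + C c * X + C b) = 0 := by simpa using h
  have ha : IsIntegral K a := ⟨_, hp, by rwa [← aeval_def]⟩
  have hle : (minpoly K a).natDegree ≤ 2 :=
    hp_deg ▸ natDegree_le_of_dvd (minpoly.dvd K a hpa) hp.ne_zero
  have hpos := minpoly.natDegree_pos ha
  rw [adjoin.finrank ha]
  interval_cases (minpoly K a).natDegree <;> norm_num

variable (K) in
/-- As `finrank` is `0` on infinite-dimensional extensions, this forces `E` to be finite
over `K`. -/
def IntermediateField.HasTwoPowerDegree (E : IntermediateField K L) : Prop :=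
  ∃ n : ℕ, finrank K E = 2 ^ n

namespace IntermediateField.HasTwoPowerDegree

theorem bot : (⊥ : IntermediateField K L).HasTwoPowerDegree := ⟨0, by simp⟩

theorem of_le {E F : IntermediateField K L} (hF : F.HasTwoPowerDegree) (h : E ≤ F) :
    E.HasTwoPowerDegree := by
  obtain ⟨n, hn⟩ := hF
  obtain ⟨m, -, hm⟩ := (Nat.dvd_prime_pow Nat.prime_two).mp (hn ▸ finrank_dvd_of_le_right h)
  exact ⟨m, hm⟩

theorem exists_le_of_sq_add_mul_add_eq_zero {F : IntermediateField K L}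
    (hF : F.HasTwoPowerDegree) {a c b : L} (hc : c ∈ F) (hb : b ∈ F)
    (h : a ^ 2 + c * a + b = 0) :
    ∃ E : IntermediateField K L, F ≤ E ∧ E.HasTwoPowerDegree ∧ a ∈ E := by
  obtain ⟨n, hn⟩ := hF
  have hle : F ≤ F⟮a⟯.restrictScalars K := fun x hx => F⟮a⟯.algebraMap_mem ⟨x, hx⟩
  obtain ⟨m, -, hm⟩ := (Nat.dvd_prime_pow Nat.prime_two (m := 1)).mp
    (finrank_adjoin_simple_dvd_two (K := F) ⟨c, hc⟩ ⟨b, hb⟩ h)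
  refine ⟨_, hle, ⟨n + m, ?_⟩, mem_adjoin_simple_self F a⟩
  rw [← finrank_bot_mul_relfinrank hle, relfinrank_eq_finrank_of_le hle, hn, pow_add]
  exact congrArg _ hm

end IntermediateField.HasTwoPowerDegree

end TwoPowerDegree

namespace WeierstrassCurve.Affine.Point

variable (K : Type*) {L : Type*} [Field K] [Field L] [Algebra K L] {W : Affine L}

def IsDefinedOverTwoPowerDegree : W.Point → Prop
  | zero => True
  | some x y _ => ∃ E : IntermediateField K L, E.HasTwoPowerDegree ∧ x ∈ E ∧ y ∈ E

end WeierstrassCurve.Affine.Point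

local notation "W₁" L:max => WeierstrassCurve.toAffine (WeierstrassCurve.baseChange E₁ L)

namespace E₁

open WeierstrassCurve.Affine

variable {L : Type*} [Field L] [Algebra ℚ L]

theorem equation_iff {x y : L} : (W₁ L).Equation x y ↔ y ^ 2 = x ^ 3 - x ^ 2 + x := by
  rw [WeierstrassCurve.Affine.equation_iff]
  simp [E₁, sub_eq_add_neg]

theorem negY_eq (x y : L) : (W₁ L).negY x y = -y := by
  simp [negY, E₁]

theorem Y_ne_negY_iff (x y : L) : y ≠ (W₁ L).negY x y ↔ y ≠ 0 := by
  have := algebraRat.charZero L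
  rw [negY_eq, Ne, CharZero.eq_neg_self_iff]

theorem exists_hasTwoPowerDegree_of_equation_zero {x : L} (h : (W₁ L).Equation x 0) :
    ∃ E : IntermediateField ℚ L, E.HasTwoPowerDegree ∧ x ∈ E := by
  rw [equation_iff] at h
  rcases mul_eq_zero.mp (show x * (x ^ 2 - x + 1) = 0 by linear_combination -h) with rfl | hx
  · exact ⟨⊥, .bot, zero_mem _⟩
  · obtain ⟨E, -, hE, hxE⟩ :=
      (HasTwoPowerDegree.bot (K := ℚ)).exists_le_of_sq_add_mul_add_eq_zero (a := x)
        (neg_mem (one_mem _)) (one_mem _) (by linear_combination hx)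
    exact ⟨E, hE, hxE⟩

variable [DecidableEq L]

theorem four_mul_sq_mul_addX_slope {x y : L} (h : (W₁ L).Equation x y) (hy : y ≠ 0) :
    4 * y ^ 2 * (W₁ L).addX x x ((W₁ L).slope x x y y) = (x ^ 2 - 1) ^ 2 := by
  rw [equation_iff] at h
  have hℓ : 2 * y * (W₁ L).slope x x y y = 3 * x ^ 2 - 2 * x + 1 := by
    have := algebraRat.charZero L
    rw [slope_of_Y_ne rfl ((Y_ne_negY_iff x y).mpr hy), negY_eq]
    norm_num [E₁]
    field_simp
    ring
  generalize (W₁ L).slope x x y y = ℓ at hℓ ⊢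
  rw [addX]
  norm_num [E₁]
  linear_combination (2 * y * ℓ + 3 * x ^ 2 - 2 * x + 1) * hℓ + (4 - 8 * x) * h

theorem exists_hasTwoPowerDegree_of_addX_mem {x y : L} (h : (W₁ L).Equation x y) (hy : y ≠ 0)
    {F : IntermediateField ℚ L} (hF : F.HasTwoPowerDegree)
    (hu : (W₁ L).addX x x ((W₁ L).slope x x y y) ∈ F) :
    ∃ E : IntermediateField ℚ L, E.HasTwoPowerDegree ∧ x ∈ E ∧ y ∈ E := by
  have hxu := four_mul_sq_mul_addX_slope h hy
  generalize (W₁ L).addX x x ((W₁ L).slope x x y y) = u at hu hxu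
  rw [equation_iff] at h
  have hx : x ≠ 0 := by
    rintro rfl
    exact hy (pow_eq_zero_iff two_ne_zero |>.mp (by simpa using h))
  set s := x + x⁻¹
  have hxs : x ^ 2 - s * x + 1 = 0 := by
    simp only [s]
    field_simp
    ring
  have hs : s ^ 2 + -(4 * u) * s + (4 * u - 4) = 0 := by
    refine (mul_eq_zero.mp ?_).resolve_left (pow_ne_zero 2 hx)
    linear_combination (-(x * s) - x ^ 2 - 1 + 4 * u * x) * hxs - hxu + 4 * u * h
  have h4 : (4 : L) ∈ F := F.natCast_mem 4
  obtain ⟨F₁, -, hF₁, hs₁⟩ := hF.exists_le_of_sq_add_mul_add_eq_zero (a := s)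
    (neg_mem (mul_mem h4 hu)) (sub_mem (mul_mem h4 hu) h4) hs
  obtain ⟨F₂, -, hF₂, hx₂⟩ := hF₁.exists_le_of_sq_add_mul_add_eq_zero (a := x)
    (neg_mem hs₁) (one_mem _) (by linear_combination hxs)
  obtain ⟨F₃, hle, hF₃, hy₃⟩ := hF₂.exists_le_of_sq_add_mul_add_eq_zero (a := y)
    (zero_mem _) (neg_mem (add_mem (sub_mem (pow_mem hx₂ 3) (pow_mem hx₂ 2)) hx₂))
    (by linear_combination h)
  exact ⟨F₃, hF₃, hle hx₂, hy₃⟩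

open WeierstrassCurve.Affine.Point in
theorem isDefinedOverTwoPowerDegree_of_two_nsmul {P : (W₁ L).Point}
    (h : (2 • P).IsDefinedOverTwoPowerDegree ℚ) : P.IsDefinedOverTwoPowerDegree ℚ := by
  rcases P with _ | ⟨x, y, hP⟩
  · trivial
  rcases eq_or_ne y 0 with rfl | hy
  · obtain ⟨E, hE, hx⟩ := exists_hasTwoPowerDegree_of_equation_zero hP.1
    exact ⟨E, hE, hx, zero_mem E⟩
  · rw [two_nsmul, add_self_of_Y_ne ((Y_ne_negY_iff x y).mpr hy)] at h
    obtain ⟨F, hF, hu, -⟩ := h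
    exact exists_hasTwoPowerDegree_of_addX_mem hP.1 hy hF hu

theorem isDefinedOverTwoPowerDegree_of_two_pow_nsmul (k : ℕ) {P : (W₁ L).Point}
    (h : (2 ^ k • P).IsDefinedOverTwoPowerDegree ℚ) : P.IsDefinedOverTwoPowerDegree ℚ := by
  induction k generalizing P with
  | zero => simpa using h
  | succ k ih =>
    rw [pow_succ, mul_nsmul'] at h
    exact isDefinedOverTwoPowerDegree_of_two_nsmul (ih h)

end E₁

open Classical in
theorem two_power_torsion_of_E1_has_two_power_degree
    (x₀ y₀ : AlgebraicClosure ℚ)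
    (hP : ((E₁.baseChange (AlgebraicClosure ℚ)).toAffine).Nonsingular x₀ y₀)
    (hord : ∃ k : ℕ, addOrderOf (WeierstrassCurve.Affine.Point.some _ _ hP) = 2 ^ k) :
    ∃ m : ℕ, Module.finrank ℚ
      (IntermediateField.adjoin ℚ ({x₀, y₀} : Set (AlgebraicClosure ℚ)) :
        IntermediateField ℚ (AlgebraicClosure ℚ)) = 2 ^ m := by
  obtain ⟨k, hk⟩ := hord
  have htorsion : 2 ^ k • WeierstrassCurve.Affine.Point.some _ _ hP = 0 :=
    hk ▸ addOrderOf_nsmul_eq_zero _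
  obtain ⟨E, hE, hx₀, hy₀⟩ := E₁.isDefinedOverTwoPowerDegree_of_two_pow_nsmul k
    (P := .some _ _ hP) (by rw [htorsion]; trivial)
  exact hE.of_le (adjoin_le_iff.mpr (Set.pair_subset hx₀ hy₀))
end
end

section
/- The elliptic curve E₁⁻¹ : y² = x³ + x² + x (the quadratic twist by −1 of y² = x³ − x² + x) has exactly two rational points: the point at infinity and the affine point (0,0). In particular, E₁⁻¹(ℚ) is finite of order 2 (Mordell–Weil rank 0). -/
/-!
Writing `x = p / q` in lowest terms, a rational point gives `(y q²)² = p q (p² + p q + q²)`, whose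
three factors are pairwise coprime and positive unless `p = 0`. So `p = a²`, `q = b²` and
`a⁴ + a²b² + b⁴` is a square. That forces `ab = 0`, by Fermat-style descent: for coprime `x` odd
and `y` even, `z² + (xy)² = (x² + y²)²` is a primitive Pythagorean triple, and splitting its
parametrization along `x`, `y` yields a solution with smaller `|z|`. Hence `(0, 0)` is the only
affine point, and the group of points has order 2.
-/

noncomputable section

/-- The elliptic curve `E₁⁻¹ : y² = x³ + x² + x` over `ℚ`,
the quadratic twist by `-1` of `y² = x³ - x² + x`. -/
def E₁inv : WeierstrassCurve ℚ := ⟨0, 1, 0, 1, 0⟩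

theorem IsCoprime.sq_add_mul_add_sq {R : Type*} [CommRing R] {p q : R} (h : IsCoprime p q) :
    IsCoprime p (p ^ 2 + p * q + q ^ 2) := by
  convert (h.pow_right (n := 2)).add_mul_left_right (p + q) using 1
  ring

namespace Int

theorem sq_add_sq_ne_four_mul_of_odd {a b : ℤ} (ha : Odd a) (hb : Odd b) (k : ℤ) :
    a ^ 2 + b ^ 2 ≠ 4 * k := by
  have := Int.sq_mod_four_eq_one_of_odd ha
  have := Int.sq_mod_four_eq_one_of_odd hb
  omega

theorem quartic_ne_sq_of_odd {x y : ℤ} (hx : Odd x) (hy : Odd y) (z : ℤ) :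
    x ^ 4 + x ^ 2 * y ^ 2 + y ^ 4 ≠ z ^ 2 := by
  have h₁ := Int.sq_mod_four_eq_one_of_odd (hx.pow (n := 2))
  have h₂ := Int.sq_mod_four_eq_one_of_odd (hx.mul hy)
  have h₃ := Int.sq_mod_four_eq_one_of_odd (hy.pow (n := 2))
  intro h
  rcases Int.even_or_odd z with ⟨k, rfl⟩ | hz
  · have : (x ^ 2) ^ 2 + (x * y) ^ 2 + (y ^ 2) ^ 2 = 4 * k ^ 2 := by linear_combination h
    omega
  · have := Int.sq_mod_four_eq_one_of_odd hz
    have : (x ^ 2) ^ 2 + (x * y) ^ 2 + (y ^ 2) ^ 2 = z ^ 2 := by linear_combination h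
    omega

theorem exists_quartic_eq_sq_of_sq_add_four_mul_sq {u v w s : ℤ} (hu : Odd u)
    (huv : IsCoprime u v) (h₁ : u ^ 2 + 4 * v ^ 2 = w ^ 2) (h₂ : v ^ 2 + s ^ 2 = w ^ 2) :
    ∃ e f, v = e * f ∧ e ^ 4 + e ^ 2 * f ^ 2 + f ^ 4 = s ^ 2 := by
  have ht : PythagoreanTriple u (2 * v) w := by
    unfold PythagoreanTriple; linear_combination h₁
  have hg : Int.gcd u (2 * v) = 1 :=
    Int.isCoprime_iff_gcd_eq_one.mp ((Int.isCoprime_two_right.mpr hu).mul_right huv)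
  obtain ⟨m, n, ⟨rfl, hv⟩ | ⟨rfl, -⟩, hw, -⟩ := PythagoreanTriple.coprime_classification.mp ⟨ht, hg⟩
  · have hv : v = m * n := by linarith
    have hw : w ^ 2 = (m ^ 2 + n ^ 2) ^ 2 := by rcases hw with rfl | rfl <;> ring
    exact ⟨m, n, hv, by linear_combination -hw - h₂ + (v + m * n) * hv⟩
  · exact absurd hu (Int.not_odd_iff_even.mpr ⟨m * n, by ring⟩)

theorem exists_quartic_eq_sq_of_sq_add_sq_eq_sq_add_sq {a b c d : ℤ} (ha : Odd a) (hb : Odd b)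
    (hac : IsCoprime a c) (had : IsCoprime a d) (hbc : IsCoprime b c) (hbd : IsCoprime b d)
    (h : (a * b) ^ 2 + (2 * c * d) ^ 2 = (a * c) ^ 2 + (b * d) ^ 2) :
    ∃ e f s : ℤ, e * f * s = c * d ∧ e ^ 4 + e ^ 2 * f ^ 2 + f ^ 4 = s ^ 2 := by
  have ha₀ : a ^ 2 ≠ 0 := pow_ne_zero 2 (by rintro rfl; simp at ha)
  -- `h` says `a²(b² - c²) = d²(b² - 4c²)`: coprimality gives a common quotient `t`,
  -- and `b ⟂ c` forces `t ∣ 3`.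
  obtain ⟨t, ht⟩ : a ^ 2 ∣ b ^ 2 - 4 * c ^ 2 :=
    (had.pow (m := 2) (n := 2)).dvd_of_dvd_mul_left ⟨b ^ 2 - c ^ 2, by linear_combination -h⟩
  have ht' : b ^ 2 - c ^ 2 = d ^ 2 * t :=
    mul_left_cancel₀ ha₀ (by linear_combination h + d ^ 2 * ht)
  have ht₃ : t ∣ 3 := by
    obtain ⟨u, v, huv⟩ := hbc.pow (m := 2) (n := 2)
    exact ⟨u * (4 * d ^ 2 - a ^ 2) + v * (d ^ 2 - a ^ 2),
      by linear_combination -3 * huv + u * (4 * ht' - ht) + v * (ht' - ht)⟩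
  have ht₃' : t = 1 ∨ t = -1 ∨ t = 3 ∨ t = -3 := by
    have := (Nat.dvd_prime Nat.prime_three).mp (Int.natAbs_dvd_natAbs.mpr ht₃)
    omega
  rcases ht₃' with rfl | rfl | rfl | rfl
  · obtain ⟨e, f, rfl, hef⟩ := exists_quartic_eq_sq_of_sq_add_four_mul_sq (w := b) (s := d) ha hac
      (by linear_combination -ht) (by linear_combination -ht')
    exact ⟨e, f, d, rfl, hef⟩
  · exact absurd (by linear_combination ht) (sq_add_sq_ne_four_mul_of_odd ha hb (c ^ 2))
  · exact absurd (by linarith : a ^ 2 + b ^ 2 = 4 * d ^ 2) (sq_add_sq_ne_four_mul_of_odd ha hb _)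
  · obtain ⟨e, f, rfl, hef⟩ := exists_quartic_eq_sq_of_sq_add_four_mul_sq (w := a) (s := c) hb hbd
      (by linarith) (by linarith)
    exact ⟨e, f, c, by ring, hef⟩

theorem exists_mul_eq_two_mul_mul_and_sq_add_sq_eq {x y z : ℤ} (hx : Odd x) (hy : Even y)
    (hxy : IsCoprime x y) (h : x ^ 4 + x ^ 2 * y ^ 2 + y ^ 4 = z ^ 2) :
    ∃ m n, x * y = 2 * m * n ∧ x ^ 2 + y ^ 2 = m ^ 2 + n ^ 2 := by
  have hx₀ : x ≠ 0 := by rintro rfl; simp at hx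
  have hz : Odd z := by
    have : Odd (z ^ 2) := h ▸ by simp [parity_simps, hx, hy]
    exact (Int.odd_pow' two_ne_zero).mp this
  have hcop : IsCoprime (x * y) z := by
    have hx' : IsCoprime x (x ^ 2 + y ^ 2) := by
      simpa [add_comm, sq] using (hxy.pow_right (n := 2)).add_mul_left_right x
    have hy' : IsCoprime y (x ^ 2 + y ^ 2) := by
      simpa [sq] using (hxy.symm.pow_right (n := 2)).add_mul_left_right y
    have : IsCoprime (x * y) (z ^ 2 + x * y * (x * y)) := by
      convert (hx'.mul_left hy').pow_right (n := 2) using 1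
      linear_combination -h
    exact IsCoprime.pow_right_iff two_pos |>.mp (this.of_add_mul_left_right)
  have ht : PythagoreanTriple z (x * y) (x ^ 2 + y ^ 2) := by
    unfold PythagoreanTriple; linear_combination -h
  obtain ⟨m, n, -, hmn, hsum, -⟩ := PythagoreanTriple.coprime_classification' ht
    (Int.isCoprime_iff_gcd_eq_one.mp hcop.symm) (Int.odd_iff.mp hz) (by positivity)
  exact ⟨m, n, hmn, hsum⟩

theorem exists_smaller_quartic_eq_sq_of_odd_of_even {x y z : ℤ} (hx : Odd x) (hy : Even y)
    (hy₀ : y ≠ 0) (hxy : IsCoprime x y) (h : x ^ 4 + x ^ 2 * y ^ 2 + y ^ 4 = z ^ 2) :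
    ∃ e f s : ℤ, e * f ≠ 0 ∧ e ^ 4 + e ^ 2 * f ^ 2 + f ^ 4 = s ^ 2 ∧ s.natAbs < z.natAbs := by
  obtain ⟨m, n, hmn, hsum⟩ := exists_mul_eq_two_mul_mul_and_sq_add_sq_eq hx hy hxy h
  obtain ⟨Y, rfl⟩ := hy
  have hY₀ : Y ≠ 0 := by rintro rfl; simp at hy₀
  have hYz : Y.natAbs < z.natAbs := by
    have : x ≠ 0 := by rintro rfl; simp at hx
    have : 0 < x ^ 4 := by positivity
    rw [Int.natAbs_lt_iff_sq_lt]
    nlinarith [Int.le_self_sq (Y ^ 2), sq_nonneg (x * Y)]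
  have hxY : x * Y = m * n := mul_left_cancel₀ two_ne_zero (by linear_combination hmn)
  -- Split `x = ab`, `m = ac`, `n = bd`, `Y = cd`; then `x² + (2Y)² = m² + n²` is the hypothesis of
  -- `exists_quartic_eq_sq_of_sq_add_sq_eq_sq_add_sq`.
  obtain ⟨a, b, ⟨c, rfl⟩, ⟨d, rfl⟩, rfl⟩ := exists_dvd_and_dvd_of_dvd_mul (Dvd.intro Y hxY)
  have hab : a * b ≠ 0 := by rintro h; simp [h] at hx
  obtain rfl : Y = c * d := mul_left_cancel₀ hab (by linear_combination hxY)
  have hcop : IsCoprime (a * b) (c * d) := hxy.of_isCoprime_of_dvd_right ⟨2, by ring⟩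
  obtain ⟨ha, hb⟩ := Int.odd_mul.mp hx
  obtain ⟨e, f, s, hefs, hq⟩ := exists_quartic_eq_sq_of_sq_add_sq_eq_sq_add_sq ha hb
    hcop.of_mul_left_left.of_mul_right_left hcop.of_mul_left_left.of_mul_right_right
    hcop.of_mul_left_right.of_mul_right_left hcop.of_mul_left_right.of_mul_right_right
    (by linear_combination hsum)
  refine ⟨e, f, s, left_ne_zero_of_mul (hefs ▸ hY₀), hq, lt_of_le_of_lt ?_ hYz⟩
  exact Int.natAbs_le_of_dvd_ne_zero ⟨e * f, by linear_combination -hefs⟩ hY₀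

theorem exists_isCoprime_quartic_eq_sq {x y z : ℤ} (hxy : x * y ≠ 0)
    (h : x ^ 4 + x ^ 2 * y ^ 2 + y ^ 4 = z ^ 2) :
    ∃ x' y' z' : ℤ, IsCoprime x' y' ∧ x' * y' ≠ 0 ∧ x' ^ 4 + x' ^ 2 * y' ^ 2 + y' ^ 4 = z' ^ 2 ∧
      z'.natAbs ≤ z.natAbs := by
  obtain ⟨g, x', y', hg, hcop, rfl, rfl⟩ :=
    Int.exists_gcd_one' (Int.gcd_pos_of_ne_zero_left y (left_ne_zero_of_mul hxy))
  have hg₀ : (g : ℤ) ^ 2 ≠ 0 := by positivity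
  obtain ⟨z', rfl⟩ : (g : ℤ) ^ 2 ∣ z :=
    (Int.pow_dvd_pow_iff two_ne_zero).mp ⟨x' ^ 4 + x' ^ 2 * y' ^ 2 + y' ^ 4, by rw [← h]; ring⟩
  refine ⟨x', y', z', Int.isCoprime_iff_gcd_eq_one.mpr hcop, ?_, ?_, ?_⟩
  · rintro h₀
    exact hxy (by linear_combination (g : ℤ) ^ 2 * h₀)
  · exact mul_left_cancel₀ (pow_ne_zero 2 hg₀) (by linear_combination h)
  · rw [Int.natAbs_mul]
    exact Nat.le_mul_of_pos_left _ (by positivity)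

theorem exists_smaller_quartic_eq_sq_of_isCoprime {x y z : ℤ} (hxy : IsCoprime x y)
    (hxy₀ : x * y ≠ 0) (h : x ^ 4 + x ^ 2 * y ^ 2 + y ^ 4 = z ^ 2) :
    ∃ e f s : ℤ, e * f ≠ 0 ∧ e ^ 4 + e ^ 2 * f ^ 2 + f ^ 4 = s ^ 2 ∧ s.natAbs < z.natAbs := by
  rcases Int.even_or_odd x with hx | hx <;> rcases Int.even_or_odd y with hy | hy
  · exact absurd (hxy.isUnit_of_dvd' hx.two_dvd hy.two_dvd) (by decide)
  · exact exists_smaller_quartic_eq_sq_of_odd_of_even hy hx (left_ne_zero_of_mul hxy₀) hxy.symm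
      (by linear_combination h)
  · exact exists_smaller_quartic_eq_sq_of_odd_of_even hx hy (right_ne_zero_of_mul hxy₀) hxy h
  · exact absurd h (quartic_ne_sq_of_odd hx hy z)

theorem mul_eq_zero_of_quartic_eq_sq {x y z : ℤ} (h : x ^ 4 + x ^ 2 * y ^ 2 + y ^ 4 = z ^ 2) :
    x * y = 0 := by
  induction hn : z.natAbs using Nat.strong_induction_on generalizing x y z with
  | _ n ih =>
    by_contra hxy
    obtain ⟨x', y', z', hcop, hxy', h', hz'⟩ := exists_isCoprime_quartic_eq_sq hxy h
    obtain ⟨e, f, s, hef, hs, hlt⟩ := exists_smaller_quartic_eq_sq_of_isCoprime hcop hxy' h'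
    exact hef (ih _ (by omega) hs rfl)

theorem exists_sq_of_isCoprime_of_nonneg {a b c : ℤ} (hab : IsCoprime a b) (h : a * b = c ^ 2)
    (ha : 0 ≤ a) : ∃ a₀, a = a₀ ^ 2 := by
  obtain ⟨a₀, h₀ | h₀⟩ := Int.sq_of_isCoprime hab h
  · exact ⟨a₀, h₀⟩
  · exact ⟨0, by nlinarith [sq_nonneg a₀]⟩

theorem eq_zero_of_mul_mul_sq_add_mul_add_sq_eq_sq {p q w : ℤ} (hq : 0 < q)
    (hpq : IsCoprime p q) (h : p * q * (p ^ 2 + p * q + q ^ 2) = w ^ 2) : p = 0 := by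
  have hS : 0 < p ^ 2 + p * q + q ^ 2 := by nlinarith [sq_nonneg (2 * p + q)]
  have hp : 0 ≤ p := by nlinarith [sq_nonneg w, mul_pos hq hS]
  have hpS := hpq.sq_add_mul_add_sq
  have hqS : IsCoprime q (p ^ 2 + p * q + q ^ 2) := by
    rw [show p ^ 2 + p * q + q ^ 2 = q ^ 2 + q * p + p ^ 2 by ring]
    exact hpq.symm.sq_add_mul_add_sq
  obtain ⟨a, rfl⟩ := exists_sq_of_isCoprime_of_nonneg (c := w) (hpq.mul_right hpS)
    (by linear_combination h) hp
  obtain ⟨b, rfl⟩ := exists_sq_of_isCoprime_of_nonneg (c := w) (hpq.symm.mul_right hqS)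
    (by linear_combination h) hq.le
  obtain ⟨r, hr⟩ := exists_sq_of_isCoprime_of_nonneg (c := w) (hpS.symm.mul_right hqS.symm)
    (by linear_combination h) hS.le
  have hb : b ≠ 0 := by rintro rfl; simp at hq
  have ha : a = 0 := by
    simpa [hb] using mul_eq_zero_of_quartic_eq_sq (x := a) (y := b) (z := r)
      (by linear_combination hr)
  simp [ha]

end Int

theorem Rat.eq_zero_of_sq_eq_cube_add_sq_add_self {x y : ℚ} (h : y ^ 2 = x ^ 3 + x ^ 2 + x) :
    x = 0 := by
  have hx : x * x.den = x.num := Rat.mul_den_eq_num x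
  obtain ⟨w, hw⟩ : IsSquare (x.num * x.den * (x.num ^ 2 + x.num * x.den + (x.den : ℤ) ^ 2)) := by
    refine Rat.isSquare_intCast_iff.mp ⟨y * x.den ^ 2, ?_⟩
    push_cast
    rw [← hx]
    linear_combination -(x.den : ℚ) ^ 4 * h
  exact Rat.num_eq_zero.mp <| Int.eq_zero_of_mul_mul_sq_add_mul_add_sq_eq_sq
    (by exact_mod_cast x.den_pos) (Int.isCoprime_iff_nat_coprime.mpr (by simpa using x.reduced))
    (hw.trans (sq w).symm)

theorem E₁inv_equation_iff (x y : ℚ) :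
    E₁inv.toAffine.Equation x y ↔ y ^ 2 = x ^ 3 + x ^ 2 + x := by
  simp [WeierstrassCurve.Affine.equation_iff, E₁inv]

theorem E₁inv_nonsingular_zero_zero : E₁inv.toAffine.Nonsingular 0 0 := by
  simp [WeierstrassCurve.Affine.nonsingular_iff, WeierstrassCurve.Affine.equation_iff, E₁inv]

theorem E₁inv_point_eq_zero_or_eq_some (P : E₁inv.toAffine.Point) :
    P = 0 ∨ P = .some 0 0 E₁inv_nonsingular_zero_zero := by
  rcases P with _ | ⟨x, y, h⟩
  · exact .inl rfl
  · have hxy := (E₁inv_equation_iff x y).mp h.1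
    obtain rfl := Rat.eq_zero_of_sq_eq_cube_add_sq_add_self hxy
    obtain rfl : y = 0 := pow_eq_zero_iff two_ne_zero |>.mp (by simpa using hxy)
    exact .inr rfl

theorem E1inv_rational_points :
    (∀ P : E₁inv.toAffine.Point,
      P = 0 ∨
      (∃ h : E₁inv.toAffine.Nonsingular 0 0, P = WeierstrassCurve.Affine.Point.some 0 0 h)) ∧
    Nonempty (E₁inv.toAffine.Point ≃+ ZMod 2) := by
  have hcard : Nat.card E₁inv.toAffine.Point = 2 :=
    Nat.card_eq_two_iff.mpr ⟨0, _,
      (WeierstrassCurve.Affine.Point.some_ne_zero E₁inv_nonsingular_zero_zero).symm,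
      Set.eq_univ_of_forall E₁inv_point_eq_zero_or_eq_some⟩
  exact ⟨fun P => (E₁inv_point_eq_zero_or_eq_some P).imp_right fun h => ⟨_, h⟩,
    ⟨addEquivOfPrimeCardEq hcard (Nat.card_zmod 2)⟩⟩
end
end
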